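/- arXiv:2512.08307 — 2 statements merged into one kernel-verified Lean document; each statement's English description precedes it below -/
import Mathlib

section
/- Let s, s′ be semisimple elements of GL₃(ℂ) of determinant 1 (viewed up to scalar, i.e. in PGL₃(ℂ)) such that the adjoint representations Ad(s) and Ad(s′) on sl₃(ℂ) have the same multiset of eigenvalues. Then s′ is conjugate to s or to s⁻¹ in PGL₃(ℂ). -/
theorem keyK (a b c a' b' c' : ℂ)
    (ha : a ≠ 0) (hb : b ≠ 0) (hc : c ≠ 0)
    (ha' : a' ≠ 0) (hb' : b' ≠ 0) (hc' : c' ≠ 0)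
    (h1 : a'/b' = a/b)
    (h2 : ({a/c, c/a, b/c, c/b} : Multiset ℂ) = {a'/c', c'/a', b'/c', c'/b'}) :
    ∃ (l : ℂ), l ≠ 0 ∧ ∃ σ : Equiv.Perm (Fin 3),
      (∀ i, ![a', b', c'] i = l * ![a, b, c] (σ i)) ∨
      (∀ i, ![a', b', c'] i = l * (![a, b, c] (σ i))⁻¹) := by
  have H1 : a' * b = a * b' := by
    field_simp at h1; linear_combination h1
  have hmem : b'/c' ∈ ({a/c, c/a, b/c, c/b} : Multiset ℂ) := by
    rw [h2]; simp
  simp only [Multiset.insert_eq_cons, Multiset.mem_cons, Multiset.mem_singleton] at hmem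
  rcases hmem with hv | hv | hv | hv
  · -- b'/c' = a/c  (case 3)
    have Hv : b' * c = a * c' := by field_simp at hv; linear_combination hv
    have hcb : c'/b' = c/a := by rw [← inv_div b' c', hv, inv_div]
    rw [hv, hcb] at h2
    have h2' : ({b/c, c/b} : Multiset ℂ) = {a'/c', c'/a'} := by
      have e1 : ({a/c, c/a, b/c, c/b} : Multiset ℂ) = a/c ::ₘ c/a ::ₘ {b/c, c/b} := by
        simp only [Multiset.insert_eq_cons, ← Multiset.singleton_add]; try ac_rfl
      have e2 : ({a'/c', c'/a', a/c, c/a} : Multiset ℂ) = a/c ::ₘ c/a ::ₘ {a'/c', c'/a'} := by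
        simp only [Multiset.insert_eq_cons, ← Multiset.singleton_add]; try ac_rfl
      rw [e1, e2] at h2
      exact (Multiset.cons_inj_right _).mp ((Multiset.cons_inj_right _).mp h2)
    have hmem2 : a'/c' ∈ ({b/c, c/b} : Multiset ℂ) := by rw [h2']; simp
    simp only [Multiset.insert_eq_cons, Multiset.mem_cons, Multiset.mem_singleton] at hmem2
    rcases hmem2 with hw | hw
    · -- a'/c' = b/c : disj1, σ = swap 0 1, l = a'/b
      have H2 : a' * c = b * c' := by field_simp at hw; linear_combination hw
      refine ⟨a'/b, div_ne_zero ha' hb, Equiv.swap 0 1, Or.inl ?_⟩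
      intro i; fin_cases i <;> simp [Equiv.swap_apply_def] <;> field_simp
      · exact mul_left_cancel₀ hc (by linear_combination b*Hv - a*H2)
      · linear_combination -H2
    · -- a'/c' = c/b : disj2, σ = swap 0 1, l = a' * b
      have H2 : a' * b = c * c' := by field_simp at hw; linear_combination hw
      refine ⟨a' * b, mul_ne_zero ha' hb, Equiv.swap 0 1, Or.inr ?_⟩
      intro i; fin_cases i <;> simp [Equiv.swap_apply_def] <;> field_simp
      · linear_combination -H1
      · linear_combination -H2
  · -- b'/c' = c/a  (case 4): disj2, σ = swap 0 1, l = a' * b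
    have Hv : b' * a = c * c' := by field_simp at hv; linear_combination hv
    refine ⟨a' * b, mul_ne_zero ha' hb, Equiv.swap 0 1, Or.inr ?_⟩
    intro i; fin_cases i <;> simp [Equiv.swap_apply_def] <;> field_simp
    · linear_combination -H1
    · linear_combination -H1 - Hv
  · -- b'/c' = b/c (case 1): disj1, σ = 1, l = b'/b
    have Hv : b' * c = b * c' := by field_simp at hv; linear_combination hv
    refine ⟨b'/b, div_ne_zero hb' hb, 1, Or.inl ?_⟩
    intro i; fin_cases i <;> simp <;> field_simp
    · linear_combination H1
    · linear_combination -Hv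
  · -- b'/c' = c/b (case 2)
    have Hv : b' * b = c * c' := by field_simp at hv; linear_combination hv
    have hcb : c'/b' = b/c := by rw [← inv_div b' c', hv, inv_div]
    rw [hv, hcb] at h2
    have h2' : ({a/c, c/a} : Multiset ℂ) = {a'/c', c'/a'} := by
      have e1 : ({a/c, c/a, b/c, c/b} : Multiset ℂ) = b/c ::ₘ c/b ::ₘ {a/c, c/a} := by
        simp only [Multiset.insert_eq_cons, ← Multiset.singleton_add]; try ac_rfl
      have e2 : ({a'/c', c'/a', c/b, b/c} : Multiset ℂ) = b/c ::ₘ c/b ::ₘ {a'/c', c'/a'} := by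
        simp only [Multiset.insert_eq_cons, ← Multiset.singleton_add]; try ac_rfl
      rw [e1, e2] at h2
      exact (Multiset.cons_inj_right _).mp ((Multiset.cons_inj_right _).mp h2)
    have hmem2 : a'/c' ∈ ({a/c, c/a} : Multiset ℂ) := by rw [h2']; simp
    simp only [Multiset.insert_eq_cons, Multiset.mem_cons, Multiset.mem_singleton] at hmem2
    rcases hmem2 with hw | hw
    · -- a'/c' = a/c : disj1, σ = 1, l = a'/a
      have H2 : a' * c = a * c' := by field_simp at hw; linear_combination hw
      refine ⟨a'/a, div_ne_zero ha' ha, 1, Or.inl ?_⟩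
      intro i; fin_cases i <;> simp <;> field_simp
      · linear_combination -H1
      · linear_combination -H2
    · -- a'/c' = c/a : disj2, σ = 1, l = a' * a
      have H2 : a' * a = c * c' := by field_simp at hw; linear_combination hw
      refine ⟨a' * a, mul_ne_zero ha' ha, 1, Or.inr ?_⟩
      intro i; fin_cases i <;> simp <;> field_simp
      · linear_combination Hv - H2
      · linear_combination -H2

/-- If two semisimple elements of `PGL₃(ℂ)`, represented by diagonal matrices
`diag(a,b,c)` and `diag(a',b',c')`, have adjoint representations on `sl₃(ℂ)` with the same
multiset of eigenvalues (namely `{1,1}` together with the six ratios of diagonal entries),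
then they are conjugate in `PGL₃(ℂ)` up to inversion: the entries of one are a permutation of
those of the other, or of its inverse, up to a common nonzero scalar. -/
theorem statement4 (a b c a' b' c' : ℂ)
    (ha : a ≠ 0) (hb : b ≠ 0) (hc : c ≠ 0)
    (ha' : a' ≠ 0) (hb' : b' ≠ 0) (hc' : c' ≠ 0)
    (h : ({1, 1, a/b, b/a, a/c, c/a, b/c, c/b} : Multiset ℂ) =
         ({1, 1, a'/b', b'/a', a'/c', c'/a', b'/c', c'/b'} : Multiset ℂ)) :
    ∃ (l : ℂ), l ≠ 0 ∧ ∃ σ : Equiv.Perm (Fin 3),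
      (∀ i, ![a', b', c'] i = l * ![a, b, c] (σ i)) ∨
      (∀ i, ![a', b', c'] i = l * (![a, b, c] (σ i))⁻¹) := by
  simp only [Multiset.insert_eq_cons] at h
  have h6 : ({a/b, b/a, a/c, c/a, b/c, c/b} : Multiset ℂ)
      = {a'/b', b'/a', a'/c', c'/a', b'/c', c'/b'} :=
    (Multiset.cons_inj_right _).mp ((Multiset.cons_inj_right _).mp h)
  have hmem : a'/b' ∈ ({a/b, b/a, a/c, c/a, b/c, c/b} : Multiset ℂ) := by rw [h6]; simp
  simp only [Multiset.insert_eq_cons, Multiset.mem_cons, Multiset.mem_singleton] at hmem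
  -- helper to finish from a permuted source
  have finish : ∀ (p q r : ℂ) (ρ : Equiv.Perm (Fin 3)),
      p ≠ 0 → q ≠ 0 → r ≠ 0 →
      (∀ j, ![p, q, r] j = ![a, b, c] (ρ j)) →
      a'/b' = p/q →
      ({p/r, r/p, q/r, r/q} : Multiset ℂ) = {a'/c', c'/a', b'/c', c'/b'} →
      ∃ (l : ℂ), l ≠ 0 ∧ ∃ σ : Equiv.Perm (Fin 3),
        (∀ i, ![a', b', c'] i = l * ![a, b, c] (σ i)) ∨
        (∀ i, ![a', b', c'] i = l * (![a, b, c] (σ i))⁻¹) := by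
    intro p q r ρ hp hq hr hρ hu hyp2
    obtain ⟨l, hl, σ, hd⟩ := keyK p q r a' b' c' hp hq hr ha' hb' hc' hu hyp2
    refine ⟨l, hl, σ.trans ρ, ?_⟩
    rcases hd with hd | hd
    · left; intro i; rw [hd i, Equiv.trans_apply, hρ (σ i)]
    · right; intro i; rw [hd i, Equiv.trans_apply, hρ (σ i)]
  rcases hmem with hu | hu | hu | hu | hu | hu
  · -- a'/b' = a/b, source (a,b,c)
    refine finish a b c 1 ha hb hc (fun j => rfl) hu ?_
    have hqp : b'/a' = b/a := by rw [← inv_div a' b', hu, inv_div]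
    rw [hu, hqp] at h6
    have e1 : ({a/b, b/a, a/c, c/a, b/c, c/b} : Multiset ℂ)
        = a/b ::ₘ b/a ::ₘ {a/c, c/a, b/c, c/b} := by
      simp only [Multiset.insert_eq_cons, ← Multiset.singleton_add]; try ac_rfl
    rw [e1] at h6
    exact (Multiset.cons_inj_right _).mp ((Multiset.cons_inj_right _).mp h6)
  · -- a'/b' = b/a, source (b,a,c)
    refine finish b a c (Equiv.swap 0 1) hb ha hc (fun j => by fin_cases j <;> rfl) hu ?_
    have hqp : b'/a' = a/b := by rw [← inv_div a' b', hu, inv_div]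
    rw [hu, hqp] at h6
    have e1 : ({a/b, b/a, a/c, c/a, b/c, c/b} : Multiset ℂ)
        = b/a ::ₘ a/b ::ₘ {b/c, c/b, a/c, c/a} := by
      simp only [Multiset.insert_eq_cons, ← Multiset.singleton_add]; try ac_rfl
    rw [e1] at h6
    exact (Multiset.cons_inj_right _).mp ((Multiset.cons_inj_right _).mp h6)
  · -- a'/b' = a/c, source (a,c,b)
    refine finish a c b (Equiv.swap 1 2) ha hc hb (fun j => by fin_cases j <;> rfl) hu ?_
    have hqp : b'/a' = c/a := by rw [← inv_div a' b', hu, inv_div]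
    rw [hu, hqp] at h6
    have e1 : ({a/b, b/a, a/c, c/a, b/c, c/b} : Multiset ℂ)
        = a/c ::ₘ c/a ::ₘ {a/b, b/a, c/b, b/c} := by
      simp only [Multiset.insert_eq_cons, ← Multiset.singleton_add]; try ac_rfl
    rw [e1] at h6
    exact (Multiset.cons_inj_right _).mp ((Multiset.cons_inj_right _).mp h6)
  · -- a'/b' = c/a, source (c,a,b)
    refine finish c a b ((Equiv.swap 0 2).trans (Equiv.swap 0 1)) hc ha hb
      (fun j => by fin_cases j <;> rfl) hu ?_
    have hqp : b'/a' = a/c := by rw [← inv_div a' b', hu, inv_div]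
    rw [hu, hqp] at h6
    have e1 : ({a/b, b/a, a/c, c/a, b/c, c/b} : Multiset ℂ)
        = c/a ::ₘ a/c ::ₘ {c/b, b/c, a/b, b/a} := by
      simp only [Multiset.insert_eq_cons, ← Multiset.singleton_add]; try ac_rfl
    rw [e1] at h6
    exact (Multiset.cons_inj_right _).mp ((Multiset.cons_inj_right _).mp h6)
  · -- a'/b' = b/c, source (b,c,a)
    refine finish b c a ((Equiv.swap 1 2).trans (Equiv.swap 0 1)) hb hc ha
      (fun j => by fin_cases j <;> rfl) hu ?_
    have hqp : b'/a' = c/b := by rw [← inv_div a' b', hu, inv_div]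
    rw [hu, hqp] at h6
    have e1 : ({a/b, b/a, a/c, c/a, b/c, c/b} : Multiset ℂ)
        = b/c ::ₘ c/b ::ₘ {b/a, a/b, c/a, a/c} := by
      simp only [Multiset.insert_eq_cons, ← Multiset.singleton_add]; try ac_rfl
    rw [e1] at h6
    exact (Multiset.cons_inj_right _).mp ((Multiset.cons_inj_right _).mp h6)
  · -- a'/b' = c/b, source (c,b,a)
    refine finish c b a (Equiv.swap 0 2) hc hb ha (fun j => by fin_cases j <;> rfl) hu ?_
    have hqp : b'/a' = b/c := by rw [← inv_div a' b', hu, inv_div]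
    rw [hu, hqp] at h6
    have e1 : ({a/b, b/a, a/c, c/a, b/c, c/b} : Multiset ℂ)
        = c/b ::ₘ b/c ::ₘ {c/a, a/c, b/a, a/b} := by
      simp only [Multiset.insert_eq_cons, ← Multiset.singleton_add]; try ac_rfl
    rw [e1] at h6
    exact (Multiset.cons_inj_right _).mp ((Multiset.cons_inj_right _).mp h6)
end

section
/- Let s = diag(a,b,c) and s′ = diag(a′,b′,c′) be diagonal matrices in SL₃(ℂ). Suppose that for each of the three roots γ ∈ {α, β, α+β} of SL₃ (where α(s) = a/b, β(s) = b/c), the pair {γ(s), γ(s)⁻¹} equals {γ(s′), γ(s′)⁻¹}. Then s′ is in the Weyl group orbit of s or of s⁻¹ (i.e. the diagonal entries of s′ are a permutation of those of s or of s⁻¹ up to common scalar of determinant-1 normalization). -/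
private lemma pair_eq' {p q : ℂ} (h : ({p, p⁻¹} : Set ℂ) = {q, q⁻¹}) :
    q = p ∨ q = p⁻¹ := by
  have hq : q ∈ ({q, q⁻¹} : Set ℂ) := by simp
  rw [← h] at hq
  simpa using hq

/-- The "same" case: all three root values agree (σ = 1, first disjunct). -/
private lemma same_case (a b c a' b' c' : ℂ)
    (ha : a ≠ 0) (hb : b ≠ 0) (hc : c ≠ 0)
    (hdet : a * b * c = 1) (hdet' : a' * b' * c' = 1)
    (h1 : a' * b = a * b') (h3 : a' * c = a * c') :
    ∃ (σ : Equiv.Perm (Fin 3)) (ζ : ℂ), ζ ^ 3 = 1 ∧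
      ((∀ i, ![a', b', c'] i = ζ * ![a, b, c] (σ i)) ∨
       (∀ i, ![a', b', c'] i = ζ * (![a, b, c] (σ i))⁻¹)) := by
  refine ⟨1, a' / a, ?_, Or.inl ?_⟩
  · field_simp
    linear_combination a'^2*a*c*h1 + a'*a^2*b'*h3 - a'^3*hdet + a^3*hdet'
  · intro i
    fin_cases i <;> simp <;> field_simp
    · linear_combination -h1
    · linear_combination -h3

/-- The "inverse" case: all three root values are inverted (σ = 1, second disjunct). -/
private lemma inv_case (a b c a' b' c' : ℂ)
    (ha : a ≠ 0) (hb : b ≠ 0) (hc : c ≠ 0)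
    (hdet : a * b * c = 1) (hdet' : a' * b' * c' = 1)
    (h1 : a' * a = b' * b) (h2 : b' * b = c' * c) :
    ∃ (σ : Equiv.Perm (Fin 3)) (ζ : ℂ), ζ ^ 3 = 1 ∧
      ((∀ i, ![a', b', c'] i = ζ * ![a, b, c] (σ i)) ∨
       (∀ i, ![a', b', c'] i = ζ * (![a, b, c] (σ i))⁻¹)) := by
  refine ⟨1, a' * a, ?_, Or.inr ?_⟩
  · linear_combination ((a'*a)^2 + a'*a*b'*b)*h1 + a'*a*b'*b*h2 + a*b*c*hdet' + hdet
  · intro i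
    fin_cases i <;> simp <;> field_simp
    · linear_combination -h1
    · linear_combination -h1 - h2

/-- For `s = diag(a,b,c)` and `s' = diag(a',b',c')` in `SL₃(ℂ)`: if for each root
`γ ∈ {α, β, α+β}` (with `α(s) = a/b`, `β(s) = b/c`, `(α+β)(s) = a/c`) the pair
`{γ(s), γ(s)⁻¹}` equals `{γ(s'), γ(s')⁻¹}`, then `s'` lies in the Weyl group (`S₃`) orbit of
`s` or of `s⁻¹`, up to a common scalar `ζ` with `ζ³ = 1`. -/
theorem statement5 (a b c a' b' c' : ℂ)
    (ha : a ≠ 0) (hb : b ≠ 0) (hc : c ≠ 0)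
    (ha' : a' ≠ 0) (hb' : b' ≠ 0) (hc' : c' ≠ 0)
    (hdet : a * b * c = 1) (hdet' : a' * b' * c' = 1)
    (hα : ({a/b, (a/b)⁻¹} : Set ℂ) = {a'/b', (a'/b')⁻¹})
    (hβ : ({b/c, (b/c)⁻¹} : Set ℂ) = {b'/c', (b'/c')⁻¹})
    (hαβ : ({a/c, (a/c)⁻¹} : Set ℂ) = {a'/c', (a'/c')⁻¹}) :
    ∃ (σ : Equiv.Perm (Fin 3)) (ζ : ℂ), ζ ^ 3 = 1 ∧
      ((∀ i, ![a', b', c'] i = ζ * ![a, b, c] (σ i)) ∨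
       (∀ i, ![a', b', c'] i = ζ * (![a, b, c] (σ i))⁻¹)) := by
  have h1 := pair_eq' hα
  have h2 := pair_eq' hβ
  have h3 := pair_eq' hαβ
  rcases h1 with h1 | h1 <;> rcases h2 with h2 | h2
  · -- α same, β same
    rw [div_eq_div_iff hb' hb] at h1
    rw [div_eq_div_iff hc' hc] at h2
    have hac : a' * c = a * c' := by
      refine mul_left_cancel₀ hb ?_
      linear_combination c * h1 + a * h2
    exact same_case a b c a' b' c' ha hb hc hdet hdet' h1 hac
  · -- α same, β inverse
    rw [div_eq_div_iff hb' hb] at h1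
    field_simp at h2  -- h2 : b' * b = c * c'
    rcases h3 with h3 | h3
    · rw [div_eq_div_iff hc' hc] at h3
      exact same_case a b c a' b' c' ha hb hc hdet hdet' h1 h3
    · field_simp at h3  -- h3 : a' * a = c * c'
      exact inv_case a b c a' b' c' ha hb hc hdet hdet'
        (by linear_combination h3 - h2) (by linear_combination h2)
  · -- α inverse, β same
    field_simp at h1  -- h1 : a' * a = b * b'
    rw [div_eq_div_iff hc' hc] at h2
    rcases h3 with h3 | h3
    · rw [div_eq_div_iff hc' hc] at h3
      have hab : a' * b = a * b' := by
        refine mul_left_cancel₀ hc ?_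
        linear_combination b * h3 - a * h2
      exact same_case a b c a' b' c' ha hb hc hdet hdet' hab h3
    · field_simp at h3  -- h3 : a' * a = c * c'
      exact inv_case a b c a' b' c' ha hb hc hdet hdet'
        (by linear_combination h1) (by linear_combination h3 - h1)
  · -- α inverse, β inverse
    field_simp at h1
    field_simp at h2
    exact inv_case a b c a' b' c' ha hb hc hdet hdet'
      (by linear_combination h1) (by linear_combination h2)
end
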